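/- Let G be a locally compact group, a ∈ G aperiodic, w a weight on G with w, w⁻¹ ∈ L^∞(G), Φ a Δ₂-regular Young function, and assume for each compact K ⊆ G with λ(K) > 0 there exist Borel sets E_k ⊆ K with λ(E_k) → λ(K) and a subsequence (n_k) such that ‖φ_{n_k}|_{E_k}‖_∞ → 0 and ‖φ̃_{n_k}|_{E_k}‖_∞ → 0, where φ_n(x) = ∏_{j=1}^n w(x a^j) and φ̃_n(x) = (∏_{j=0}^{n−1} w(x a^{−j}))⁻¹. Then the weighted translation T_{a,w} is topologically transitive on L^Φ(G). -/

import Mathlib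

/-!
Closeness is measured through the modular `∫ Φ(|u|/k) dμ ≤ 1`, which bounds the Luxemburg norm
by `k` and, by convexity of `Φ`, is subadditive in `k`. As `G` has an aperiodic element it is not
compact, so `Φ` is Δ₂ globally and `f, g ∈ L^Φ` have finite modular at every scale; hence they are
modular-close to bounded functions `f₀, g₀` supported in a compact set `K`. The weight condition
gives `E ⊆ K` of almost full measure and `n` with `φ_n, φ̃_n` small on `E`. With `f₁ = 1_E f₀` and
`g₁ = 1_E g₀` put `h = f₁ + S^n g₁`; since `T^n S^n = id`, `T^n h = T^n f₁ + g₁`. By right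
invariance of `μ`, `T^n f₁` and `S^n g₁` have the modulars of `φ_n f₁` and `φ̃_n g₁`, which are
small, so `h` is close to `f₀` and `T^n h` to `g₀`.
-/

open MeasureTheory Filter Set Topology

/-- A Young function: continuous, even, convex, vanishing at 0, positive on positives,
tending to infinity. -/
structure IsYoung (Φ : ℝ → ℝ) : Prop where
  continuous : Continuous Φ
  even : ∀ t, Φ (-t) = Φ t
  convex : ConvexOn ℝ Set.univ Φ
  zero : Φ 0 = 0
  pos : ∀ t : ℝ, 0 < t → 0 < Φ t
  tendsto_top : Tendsto Φ atTop atTop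

/-- The complementary Young function Ψ(y) = sup { x|y| − Φ(x) : x ≥ 0 }. -/
noncomputable def complementaryYoung (Φ : ℝ → ℝ) (y : ℝ) : ℝ :=
  sSup {z : ℝ | ∃ x : ℝ, 0 ≤ x ∧ z = x * |y| - Φ x}

/-- Generalized inverse of a Young function on [0, ∞). -/
noncomputable def youngInv (Φ : ℝ → ℝ) (t : ℝ) : ℝ :=
  sSup {s : ℝ | 0 ≤ s ∧ Φ s ≤ t}

/-- The Luxemburg norm N_Φ(f) = inf { k > 0 : ∫ Φ(|f|/k) dμ ≤ 1 }. -/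
noncomputable def luxNorm {G : Type*} [MeasurableSpace G] (Φ : ℝ → ℝ) (μ : Measure G)
    (f : G → ℂ) : ℝ :=
  sInf {k : ℝ | 0 < k ∧ ∫⁻ x, ENNReal.ofReal (Φ (‖f x‖ / k)) ∂μ ≤ 1}

/-- Membership in the Orlicz space L^Φ(G). -/
def MemOrlicz {G : Type*} [MeasurableSpace G] (Φ : ℝ → ℝ) (μ : Measure G)
    (f : G → ℂ) : Prop :=
  Measurable f ∧ ∃ α : ℝ, 0 < α ∧ ∫⁻ x, ENNReal.ofReal (Φ (α * ‖f x‖)) ∂μ < ⊤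

/-- The weighted translation operator T_{a,w} f (x) = w(x) f(x a⁻¹). -/
noncomputable def wT {G : Type*} [Group G] (a : G) (w : G → ℝ) (f : G → ℂ) : G → ℂ :=
  fun x => (w x : ℂ) * f (x * a⁻¹)

/-- The operator S_{a,w} h (x) = h(xa) / w(xa). -/
noncomputable def wS {G : Type*} [Group G] (a : G) (w : G → ℝ) (h : G → ℂ) : G → ℂ :=
  fun x => h (x * a) / (w (x * a) : ℂ)

/-- φ_n(x) = ∏_{j=1}^n w(x a^j). -/
noncomputable def phiW {G : Type*} [Group G] (a : G) (w : G → ℝ) (n : ℕ) (x : G) : ℝ :=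
  ∏ j ∈ Finset.Icc 1 n, w (x * a ^ j)

/-- φ̃_n(x) = (∏_{j=0}^{n-1} w(x a^{-j}))⁻¹. -/
noncomputable def phiTW {G : Type*} [Group G] (a : G) (w : G → ℝ) (n : ℕ) (x : G) : ℝ :=
  (∏ j ∈ Finset.range n, w (x * a ^ (-(j : ℤ))))⁻¹

/-- a is aperiodic: for every compact K there is M with K ∩ K a^{±n} = ∅ for all n > M. -/
def AperiodicElem {G : Type*} [Group G] [TopologicalSpace G] (a : G) : Prop :=
  ∀ K : Set G, IsCompact K → ∃ M : ℕ, ∀ n : ℕ, M < n →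
    K ∩ ((fun x => x * a ^ n) '' K) = ∅ ∧ K ∩ ((fun x => x * (a ^ n)⁻¹) '' K) = ∅

/-- Δ₂-regularity of a Young function relative to the (non)compactness of G. -/
def Delta2Regular (G : Type*) [TopologicalSpace G] (Φ : ℝ → ℝ) : Prop :=
  (CompactSpace G → ∃ M : ℝ, 0 < M ∧ ∃ t₀ : ℝ, 0 < t₀ ∧
      ∀ t : ℝ, t₀ ≤ t → Φ (2 * t) ≤ M * Φ t) ∧
  (¬ CompactSpace G → ∃ M : ℝ, 0 < M ∧ ∀ t : ℝ, 0 < t → Φ (2 * t) ≤ M * Φ t)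

/-- Topological transitivity of T on L^Φ(G). -/
def OrliczTransitive {G : Type*} [MeasurableSpace G] (Φ : ℝ → ℝ) (μ : Measure G)
    (T : (G → ℂ) → (G → ℂ)) : Prop :=
  ∀ f g : G → ℂ, MemOrlicz Φ μ f → MemOrlicz Φ μ g → ∀ ε : ℝ, 0 < ε →
    ∃ h : G → ℂ, MemOrlicz Φ μ h ∧ ∃ n : ℕ,
      luxNorm Φ μ (h - f) < ε ∧ luxNorm Φ μ (T^[n] h - g) < ε

/-- Topological mixing of T on L^Φ(G). -/
def OrliczMixing {G : Type*} [MeasurableSpace G] (Φ : ℝ → ℝ) (μ : Measure G)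
    (T : (G → ℂ) → (G → ℂ)) : Prop :=
  ∀ f g : G → ℂ, MemOrlicz Φ μ f → MemOrlicz Φ μ g → ∀ ε : ℝ, 0 < ε →
    ∃ N : ℕ, ∀ n : ℕ, N ≤ n → ∃ h : G → ℂ, MemOrlicz Φ μ h ∧
      luxNorm Φ μ (h - f) < ε ∧ luxNorm Φ μ (T^[n] h - g) < ε

/-- Recurrence of T on L^Φ(G). -/
def OrliczRecurrent {G : Type*} [MeasurableSpace G] (Φ : ℝ → ℝ) (μ : Measure G)
    (T : (G → ℂ) → (G → ℂ)) : Prop :=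
  ∀ f : G → ℂ, MemOrlicz Φ μ f → ∀ ε : ℝ, 0 < ε →
    ∃ n : ℕ, 1 ≤ n ∧ ∃ h : G → ℂ, MemOrlicz Φ μ h ∧
      luxNorm Φ μ (h - f) < ε ∧ luxNorm Φ μ (T^[n] h - f) < ε

/-- Topological multiple recurrence of T on L^Φ(G). -/
def OrliczMultiplyRecurrent {G : Type*} [MeasurableSpace G] (Φ : ℝ → ℝ) (μ : Measure G)
    (T : (G → ℂ) → (G → ℂ)) : Prop :=
  ∀ L : ℕ, 1 ≤ L → ∀ f : G → ℂ, MemOrlicz Φ μ f → ∀ ε : ℝ, 0 < ε →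
    ∃ n : ℕ, 1 ≤ n ∧ ∃ h : G → ℂ, MemOrlicz Φ μ h ∧
      luxNorm Φ μ (h - f) < ε ∧
      ∀ l : ℕ, 1 ≤ l → l ≤ L → luxNorm Φ μ (T^[l * n] h - f) < ε

/-- Density of the set of periodic points of T in L^Φ(G). -/
def OrliczDensePeriodic {G : Type*} [MeasurableSpace G] (Φ : ℝ → ℝ) (μ : Measure G)
    (T : (G → ℂ) → (G → ℂ)) : Prop :=
  ∀ f : G → ℂ, MemOrlicz Φ μ f → ∀ ε : ℝ, 0 < ε →
    ∃ g : G → ℂ, MemOrlicz Φ μ g ∧ (∃ n : ℕ, 1 ≤ n ∧ T^[n] g = g) ∧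
      luxNorm Φ μ (g - f) < ε

/-- The weight condition for transitivity/recurrence. -/
def WeightCondition {G : Type*} [Group G] [TopologicalSpace G] [MeasurableSpace G]
    (μ : Measure G) (a : G) (w : G → ℝ) : Prop :=
  ∀ K : Set G, IsCompact K → 0 < μ K →
    ∃ E : ℕ → Set G, ∃ n : ℕ → ℕ, StrictMono n ∧
      (∀ k, MeasurableSet (E k) ∧ E k ⊆ K) ∧
      Tendsto (fun k => μ (E k)) atTop (nhds (μ K)) ∧
      ∀ ε : ℝ, 0 < ε → ∃ N : ℕ, ∀ k, N ≤ k → ∀ x ∈ E k,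
        phiW a w (n k) x < ε ∧ phiTW a w (n k) x < ε

/-- The weight condition for chaos (density of periodic points). -/
def ChaosWeightCondition {G : Type*} [Group G] [TopologicalSpace G] [MeasurableSpace G]
    (μ : Measure G) (a : G) (w : G → ℝ) : Prop :=
  ∀ K : Set G, IsCompact K → 0 < μ K →
    ∃ E : ℕ → Set G, ∃ n : ℕ → ℕ, StrictMono n ∧
      (∀ k, MeasurableSet (E k) ∧ E k ⊆ K) ∧
      Tendsto (fun k => μ (E k)) atTop (nhds (μ K)) ∧
      ∀ ε : ℝ, 0 < ε → ∃ N : ℕ, ∀ k, N ≤ k → ∀ x ∈ E k,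
        (∑' l : ℕ, phiW a w ((l + 1) * n k) x) +
          (∑' l : ℕ, phiTW a w ((l + 1) * n k) x) < ε

open scoped ENNReal

namespace IsYoung

variable {Φ : ℝ → ℝ}

theorem nonneg (hΦ : IsYoung Φ) (t : ℝ) : 0 ≤ Φ t := by
  rcases lt_trichotomy t 0 with h | rfl | h
  · rw [← hΦ.even]; exact (hΦ.pos _ (neg_pos.2 h)).le
  · rw [hΦ.zero]
  · exact (hΦ.pos t h).le

theorem mono (hΦ : IsYoung Φ) {s t : ℝ} (hs : 0 ≤ s) (hst : s ≤ t) : Φ s ≤ Φ t := by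
  rcases hst.eq_or_lt with rfl | hlt
  · rfl
  have ht : 0 < t := hs.trans_lt hlt
  have hst' : s / t ≤ 1 := (div_le_one ht).2 hst
  have hconv := hΦ.convex.2 (mem_univ 0) (mem_univ t) (sub_nonneg.2 hst')
    (div_nonneg hs ht.le) (sub_add_cancel 1 (s / t))
  simp only [smul_eq_mul, mul_zero, zero_add, hΦ.zero, div_mul_cancel₀ s ht.ne'] at hconv
  calc Φ s ≤ s / t * Φ t := hconv
    _ ≤ Φ t := mul_le_of_le_one_left (hΦ.nonneg t) hst'

theorem le_pow_mul_of_doubling (hΦ : IsYoung Φ) {M : ℝ} (hM0 : 0 ≤ M)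
    (hM : ∀ t, 0 < t → Φ (2 * t) ≤ M * Φ t) (j : ℕ) {t : ℝ} (ht : 0 ≤ t) :
    Φ (2 ^ j * t) ≤ M ^ j * Φ t := by
  rcases ht.eq_or_lt with rfl | ht
  · simp [hΦ.zero]
  induction j with
  | zero => simp
  | succ j ih =>
    calc Φ (2 ^ (j + 1) * t) = Φ (2 * (2 ^ j * t)) := by ring_nf
      _ ≤ M * Φ (2 ^ j * t) := hM _ (by positivity)
      _ ≤ M * (M ^ j * Φ t) := mul_le_mul_of_nonneg_left ih hM0
      _ = M ^ (j + 1) * Φ t := by ring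

theorem exists_pos_ofReal_mul_le_one (hΦ : IsYoung Φ) {C : ℝ≥0∞} (hC : C ≠ ∞) (s : ℝ) :
    ∃ t > 0, ENNReal.ofReal (Φ (t * s)) * C ≤ 1 := by
  have hcont : Continuous fun t => ENNReal.ofReal (Φ (t * s)) :=
    ENNReal.continuous_ofReal.comp (hΦ.continuous.comp (continuous_mul_const s))
  have hlim : Tendsto (fun t => ENNReal.ofReal (Φ (t * s)) * C) (𝓝[>] 0) (𝓝 0) := by
    have := ENNReal.Tendsto.mul_const (hcont.tendsto 0) (Or.inr hC)
    simpa [hΦ.zero] using tendsto_nhdsWithin_of_tendsto_nhds this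
  obtain ⟨t, ht, ht0⟩ := ((hlim.eventually (gt_mem_nhds one_pos)).and self_mem_nhdsWithin).exists
  exact ⟨t, ht0, ht.le⟩

end IsYoung

section Modular

variable {G : Type*} [MeasurableSpace G] {Φ : ℝ → ℝ} {μ : Measure G}

noncomputable def orliczModular (Φ : ℝ → ℝ) (μ : Measure G) (f : G → ℂ) (k : ℝ) : ℝ≥0∞ :=
  ∫⁻ x, ENNReal.ofReal (Φ (‖f x‖ / k)) ∂μ

theorem luxNorm_le_of_orliczModular_le_one {f : G → ℂ} {k : ℝ} (hk : 0 < k)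
    (h : orliczModular Φ μ f k ≤ 1) : luxNorm Φ μ f ≤ k :=
  csInf_le ⟨0, fun _ hx => hx.1.le⟩ ⟨hk, h⟩

theorem memOrlicz_iff {f : G → ℂ} :
    MemOrlicz Φ μ f ↔ Measurable f ∧ ∃ k, 0 < k ∧ orliczModular Φ μ f k < ∞ := by
  have hscale : ∀ α : ℝ, orliczModular Φ μ f α⁻¹ = ∫⁻ x, ENNReal.ofReal (Φ (α * ‖f x‖)) ∂μ :=
    fun α => by simp only [orliczModular, div_inv_eq_mul, mul_comm]
  refine and_congr_right fun _ => ⟨fun ⟨α, hα, h⟩ => ⟨α⁻¹, inv_pos.2 hα, hscale α ▸ h⟩,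
    fun ⟨k, hk, h⟩ => ⟨k⁻¹, inv_pos.2 hk, ?_⟩⟩
  rwa [← hscale, inv_inv]

theorem orliczModular_add_le (hΦ : IsYoung Φ) {u v : G → ℂ} (hv : Measurable v) {k₁ k₂ : ℝ}
    (hk₁ : 0 < k₁) (hk₂ : 0 < k₂) :
    orliczModular Φ μ (u + v) (k₁ + k₂) ≤
      ENNReal.ofReal (k₁ / (k₁ + k₂)) * orliczModular Φ μ u k₁ +
        ENNReal.ofReal (k₂ / (k₁ + k₂)) * orliczModular Φ μ v k₂ := by
  have hk : 0 < k₁ + k₂ := add_pos hk₁ hk₂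
  have hpt : ∀ x, Φ (‖u x + v x‖ / (k₁ + k₂)) ≤
      k₁ / (k₁ + k₂) * Φ (‖u x‖ / k₁) + k₂ / (k₁ + k₂) * Φ (‖v x‖ / k₂) := fun x => by
    have hcomb : k₁ / (k₁ + k₂) * (‖u x‖ / k₁) + k₂ / (k₁ + k₂) * (‖v x‖ / k₂) =
        (‖u x‖ + ‖v x‖) / (k₁ + k₂) := by field_simp
    calc Φ (‖u x + v x‖ / (k₁ + k₂)) ≤ Φ ((‖u x‖ + ‖v x‖) / (k₁ + k₂)) :=
          hΦ.mono (by positivity) (by gcongr; exact norm_add_le _ _)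
      _ ≤ _ := by
          rw [← hcomb]
          exact hΦ.convex.2 (mem_univ _) (mem_univ _) (by positivity) (by positivity)
            (by field_simp)
  calc orliczModular Φ μ (u + v) (k₁ + k₂)
      ≤ ∫⁻ x, (ENNReal.ofReal (k₁ / (k₁ + k₂)) * ENNReal.ofReal (Φ (‖u x‖ / k₁)) +
          ENNReal.ofReal (k₂ / (k₁ + k₂)) * ENNReal.ofReal (Φ (‖v x‖ / k₂))) ∂μ := by
        refine lintegral_mono fun x => ?_
        rw [← ENNReal.ofReal_mul (by positivity), ← ENNReal.ofReal_mul (by positivity),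
          ← ENNReal.ofReal_add (mul_nonneg (by positivity) (hΦ.nonneg _))
            (mul_nonneg (by positivity) (hΦ.nonneg _))]
        exact ENNReal.ofReal_le_ofReal (hpt x)
    _ = _ := by
        have hmeas : Measurable fun x =>
            ENNReal.ofReal (k₂ / (k₁ + k₂)) * ENNReal.ofReal (Φ (‖v x‖ / k₂)) :=
          (hΦ.continuous.measurable.comp (hv.norm.div_const k₂)).ennreal_ofReal.const_mul _
        rw [lintegral_add_right _ hmeas,
          lintegral_const_mul' _ _ ENNReal.ofReal_ne_top,
          lintegral_const_mul' _ _ ENNReal.ofReal_ne_top]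
        rfl

theorem orliczModular_add_le_one (hΦ : IsYoung Φ) {u v : G → ℂ} (hv : Measurable v)
    {k₁ k₂ : ℝ} (hk₁ : 0 < k₁) (hk₂ : 0 < k₂) (hu1 : orliczModular Φ μ u k₁ ≤ 1)
    (hv1 : orliczModular Φ μ v k₂ ≤ 1) : orliczModular Φ μ (u + v) (k₁ + k₂) ≤ 1 := by
  refine (orliczModular_add_le hΦ hv hk₁ hk₂).trans ?_
  calc _ ≤ ENNReal.ofReal (k₁ / (k₁ + k₂)) * 1 + ENNReal.ofReal (k₂ / (k₁ + k₂)) * 1 := by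
        gcongr
    _ = 1 := by
        rw [mul_one, mul_one, ← ENNReal.ofReal_add (by positivity) (by positivity), ← add_div,
          div_self (add_pos hk₁ hk₂).ne', ENNReal.ofReal_one]

theorem MemOrlicz.add (hΦ : IsYoung Φ) {f g : G → ℂ} (hf : MemOrlicz Φ μ f)
    (hg : MemOrlicz Φ μ g) : MemOrlicz Φ μ (f + g) := by
  obtain ⟨hfm, k₁, hk₁, hf⟩ := memOrlicz_iff.1 hf
  obtain ⟨hgm, k₂, hk₂, hg⟩ := memOrlicz_iff.1 hg
  refine memOrlicz_iff.2 ⟨hfm.add hgm, k₁ + k₂, add_pos hk₁ hk₂,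
    (orliczModular_add_le hΦ hgm hk₁ hk₂).trans_lt ?_⟩
  exact ENNReal.add_lt_top.2 ⟨ENNReal.mul_lt_top ENNReal.ofReal_lt_top hf,
    ENNReal.mul_lt_top ENNReal.ofReal_lt_top hg⟩

theorem orliczModular_lt_top_of_doubling (hΦ : IsYoung Φ) {M : ℝ} (hM0 : 0 < M)
    (hM : ∀ t, 0 < t → Φ (2 * t) ≤ M * Φ t) {f : G → ℂ} {k k' : ℝ} (hk : 0 < k)
    (hf : orliczModular Φ μ f k < ∞) (hk' : 0 < k') : orliczModular Φ μ f k' < ∞ := by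
  obtain ⟨j, hj⟩ := pow_unbounded_of_one_lt (k / k') one_lt_two
  have hpt : ∀ x, ENNReal.ofReal (Φ (‖f x‖ / k')) ≤
      ENNReal.ofReal (M ^ j) * ENNReal.ofReal (Φ (‖f x‖ / k)) := fun x => by
    rw [← ENNReal.ofReal_mul (by positivity)]
    refine ENNReal.ofReal_le_ofReal ((hΦ.mono (by positivity) ?_).trans
      (hΦ.le_pow_mul_of_doubling hM0.le hM j (by positivity)))
    calc ‖f x‖ / k' = k / k' * (‖f x‖ / k) := by field_simp
      _ ≤ 2 ^ j * (‖f x‖ / k) := by gcongr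
  calc orliczModular Φ μ f k' ≤ ∫⁻ x, ENNReal.ofReal (M ^ j) * ENNReal.ofReal (Φ (‖f x‖ / k)) ∂μ :=
        lintegral_mono hpt
    _ = ENNReal.ofReal (M ^ j) * orliczModular Φ μ f k :=
        lintegral_const_mul' _ _ ENNReal.ofReal_ne_top
    _ < ∞ := ENNReal.mul_lt_top ENNReal.ofReal_lt_top hf

theorem orliczModular_le_of_norm_le_indicator (hΦ : IsYoung Φ) {u : G → ℂ} {A : Set G}
    {c k : ℝ} (hk : 0 < k) (hu : ∀ x, ‖u x‖ ≤ A.indicator (fun _ => c) x) :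
    orliczModular Φ μ u k ≤ ENNReal.ofReal (Φ (c / k)) * μ A := by
  refine (lintegral_mono fun x => ?_).trans (lintegral_indicator_const_le A _)
  by_cases hx : x ∈ A
  · have hux := hu x
    rw [indicator_of_mem hx] at hux ⊢
    exact ENNReal.ofReal_le_ofReal (hΦ.mono (by positivity) (by gcongr))
  · have : u x = 0 := norm_le_zero_iff.1 ((hu x).trans_eq (indicator_of_notMem hx _))
    simp [this, hΦ.zero]

theorem orliczModular_comp_mul_right [Group G] [MeasurableMul G] [μ.IsMulRightInvariant]
    (u : G → ℂ) (b : G) (k : ℝ) :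
    orliczModular Φ μ (fun x => u (x * b)) k = orliczModular Φ μ u k :=
  lintegral_mul_right_eq_self (fun x => ENNReal.ofReal (Φ (‖u x‖ / k))) b

end Modular

theorem exists_bounded_compact_orliczModular_sub_le_one {G : Type*} [TopologicalSpace G]
    [R1Space G] [SigmaCompactSpace G] [MeasurableSpace G] [OpensMeasurableSpace G]
    {Φ : ℝ → ℝ} {μ : Measure G} (hΦ : IsYoung Φ) {f : G → ℂ} (hf : Measurable f) {k : ℝ}
    (hfin : orliczModular Φ μ f k < ∞) :
    ∃ f₀ : G → ℂ, ∃ C : Set G, ∃ R : ℝ, Measurable f₀ ∧ IsCompact C ∧ 0 ≤ R ∧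
      (∀ x, ‖f₀ x‖ ≤ C.indicator (fun _ => R) x) ∧ orliczModular Φ μ (f₀ - f) k ≤ 1 := by
  set F : G → ℝ≥0∞ := fun x => ENNReal.ofReal (Φ (‖f x‖ / k))
  set A : ℕ → Set G := fun m => closure (compactCovering G m) ∩ {x | ‖f x‖ ≤ m}
  have hA : ∀ m, MeasurableSet (A m) := fun m =>
    isClosed_closure.measurableSet.inter (measurableSet_le hf.norm measurable_const)
  have hmod : ∀ m,
      orliczModular Φ μ ((A m).indicator f - f) k = ∫⁻ x, (A m)ᶜ.indicator F x ∂μ :=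
    fun m => lintegral_congr fun x => by
      by_cases hx : x ∈ A m
      · simp [hx, hΦ.zero]
      · simp [hx, F]
  have hlim : Tendsto (fun m => ∫⁻ x, (A m)ᶜ.indicator F x ∂μ) atTop (𝓝 0) := by
    refine lintegral_zero (μ := μ) ▸ tendsto_lintegral_of_dominated_convergence F
      (fun m => (hΦ.continuous.measurable.comp (hf.norm.div_const k)).ennreal_ofReal.indicator
        (hA m).compl) (fun m => ae_of_all _ (indicator_le_self _ _)) hfin.ne (ae_of_all _ ?_)
    intro x
    obtain ⟨m₀, hm₀⟩ := exists_mem_compactCovering x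
    refine tendsto_const_nhds.congr' ?_
    filter_upwards [eventually_ge_atTop m₀, eventually_ge_atTop ⌈‖f x‖⌉₊] with m hm hm'
    have hxA : x ∈ A m := ⟨subset_closure (compactCovering_subset G hm hm₀),
      (Nat.le_ceil _).trans (Nat.cast_le.2 hm')⟩
    simp [hxA]
  obtain ⟨m, hm⟩ := (hlim.eventually (gt_mem_nhds one_pos)).exists
  refine ⟨(A m).indicator f, closure (compactCovering G m), m, hf.indicator (hA m),
    (isCompact_compactCovering G m).closure, m.cast_nonneg, fun x => ?_, (hmod m).trans_le hm.le⟩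
  by_cases hx : x ∈ A m
  · simpa [hx, hx.1] using hx.2
  · simp [hx, indicator_nonneg (fun _ _ => m.cast_nonneg)]

section WeightedTranslation

variable {G : Type*} [Group G] (a : G) (w : G → ℝ)

theorem phiW_succ (n : ℕ) (x : G) : phiW a w (n + 1) x = phiW a w n x * w (x * a ^ (n + 1)) :=
  Finset.prod_Icc_succ_top (Nat.le_add_left 1 n) _

theorem phiTW_succ (n : ℕ) (x : G) :
    phiTW a w (n + 1) x = phiTW a w n x * (w (x * (a ^ n)⁻¹))⁻¹ := by
  rw [phiTW, phiTW, Finset.prod_range_succ, mul_inv, zpow_neg, zpow_natCast]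

variable {a w}

theorem phiW_nonneg (hw : ∀ x, 0 ≤ w x) (n : ℕ) (x : G) : 0 ≤ phiW a w n x :=
  Finset.prod_nonneg fun _ _ => hw _

theorem phiTW_nonneg (hw : ∀ x, 0 ≤ w x) (n : ℕ) (x : G) : 0 ≤ phiTW a w n x :=
  inv_nonneg.2 (Finset.prod_nonneg fun _ _ => hw _)

variable (a w)

theorem wT_iterate_apply (n : ℕ) (u : G → ℂ) (x : G) :
    (wT a w)^[n] u x = phiW a w n (x * (a ^ n)⁻¹) * u (x * (a ^ n)⁻¹) := by
  induction n generalizing x with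
  | zero => simp [phiW]
  | succ n ih =>
    have hx : x * a⁻¹ * (a ^ n)⁻¹ = x * (a ^ (n + 1))⁻¹ := by
      rw [pow_succ, mul_inv_rev, mul_assoc]
    rw [Function.iterate_succ_apply', wT, ih, hx, phiW_succ, inv_mul_cancel_right]
    push_cast
    ring

theorem wS_iterate_apply (n : ℕ) (u : G → ℂ) (x : G) :
    (wS a w)^[n] u x = phiTW a w n (x * a ^ n) * u (x * a ^ n) := by
  induction n generalizing x with
  | zero => simp [phiTW]
  | succ n ih =>
    have hx : x * a * a ^ n = x * a ^ (n + 1) := by rw [pow_succ', mul_assoc]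
    rw [Function.iterate_succ_apply', wS, ih, hx, phiTW_succ, pow_succ', ← mul_assoc,
      mul_inv_cancel_right]
    push_cast
    ring

theorem wT_iterate_add (n : ℕ) (u v : G → ℂ) :
    (wT a w)^[n] (u + v) = (wT a w)^[n] u + (wT a w)^[n] v := by
  funext x
  simp only [Pi.add_apply, wT_iterate_apply, mul_add]

variable {w}

theorem wT_wS (hw : ∀ x, w x ≠ 0) (u : G → ℂ) : wT a w (wS a w u) = u := by
  funext x
  rw [wT, wS, inv_mul_cancel_right, mul_div_cancel₀ _ (Complex.ofReal_ne_zero.2 (hw x))]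

theorem wT_iterate_wS_iterate (hw : ∀ x, w x ≠ 0) (n : ℕ) (u : G → ℂ) :
    (wT a w)^[n] ((wS a w)^[n] u) = u := by
  induction n with
  | zero => rfl
  | succ n ih => rw [Function.iterate_succ_apply, Function.iterate_succ_apply', wT_wS a hw, ih]

theorem measurable_wS_iterate [MeasurableSpace G] [MeasurableMul G] (hw : Measurable w)
    (n : ℕ) {u : G → ℂ} (hu : Measurable u) : Measurable ((wS a w)^[n] u) := by
  induction n with
  | zero => exact hu
  | succ n ih =>
    rw [Function.iterate_succ_apply']
    exact (ih.comp (measurable_mul_const a)).div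
      ((Complex.measurable_ofReal.comp hw).comp (measurable_mul_const a))

end WeightedTranslation

section IndicatorBounds

variable {G : Type*} {u : G → ℂ} {E K : Set G} {R : ℝ}

theorem norm_ofReal_mul_le_indicator {ρ : G → ℝ} {c : ℝ} (hρ0 : ∀ x, 0 ≤ ρ x)
    (hρ : ∀ x ∈ E, ρ x ≤ c) (hu : ∀ x, ‖u x‖ ≤ E.indicator (fun _ => R) x) (x : G) :
    ‖(ρ x : ℂ) * u x‖ ≤ E.indicator (fun _ => c * R) x := by
  have hux := hu x
  by_cases hx : x ∈ E
  · rw [indicator_of_mem hx] at hux ⊢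
    rw [norm_mul, Complex.norm_real, Real.norm_of_nonneg (hρ0 x)]
    exact mul_le_mul (hρ x hx) hux (norm_nonneg _) ((hρ0 x).trans (hρ x hx))
  · rw [indicator_of_notMem hx] at hux ⊢
    simp [norm_le_zero_iff.1 hux]

theorem norm_indicator_le_indicator (hu : ∀ x, ‖u x‖ ≤ K.indicator (fun _ => R) x)
    (hEK : E ⊆ K) (x : G) : ‖E.indicator u x‖ ≤ E.indicator (fun _ => R) x := by
  by_cases hx : x ∈ E
  · simpa [hx, hEK hx] using hu x
  · simp [hx]

theorem norm_indicator_sub_le_indicator_diff (hu : ∀ x, ‖u x‖ ≤ K.indicator (fun _ => R) x)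
    (x : G) : ‖E.indicator u x - u x‖ ≤ (K \ E).indicator (fun _ => R) x := by
  by_cases hx : x ∈ E
  · simp [hx]
  · have hK : (K \ E).indicator (fun _ => R) x = K.indicator (fun _ => R) x := by
      by_cases hxK : x ∈ K
      · rw [indicator_of_mem (show x ∈ K \ E from ⟨hxK, hx⟩), indicator_of_mem hxK]
      · rw [indicator_of_notMem (fun h => hxK h.1), indicator_of_notMem hxK]
    simpa [hx, hK] using hu x

theorem norm_le_indicator_of_subset {C : Set G} {R' : ℝ}
    (hu : ∀ x, ‖u x‖ ≤ C.indicator (fun _ => R) x) (hCK : C ⊆ K) (hR : 0 ≤ R) (hRR' : R ≤ R')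
    (x : G) : ‖u x‖ ≤ K.indicator (fun _ => R') x :=
  (hu x).trans ((indicator_le_indicator_of_subset hCK (fun _ => hR) x).trans
    (indicator_le_indicator hRR'))

end IndicatorBounds

section TranslationModular

variable {G : Type*} [Group G] [MeasurableSpace G] [MeasurableMul G] {μ : Measure G}
  [μ.IsMulRightInvariant] {Φ : ℝ → ℝ} {a : G} {w : G → ℝ} {u : G → ℂ} {E : Set G}
  {R c k : ℝ} {n : ℕ}

theorem orliczModular_wT_iterate_le (hΦ : IsYoung Φ) (hw : ∀ x, 0 ≤ w x) (hk : 0 < k)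
    (hu : ∀ x, ‖u x‖ ≤ E.indicator (fun _ => R) x) (hφ : ∀ x ∈ E, phiW a w n x ≤ c) :
    orliczModular Φ μ ((wT a w)^[n] u) k ≤ ENNReal.ofReal (Φ (c * R / k)) * μ E := by
  rw [funext (wT_iterate_apply a w n u),
    orliczModular_comp_mul_right (fun y => (phiW a w n y : ℂ) * u y)]
  exact orliczModular_le_of_norm_le_indicator hΦ hk
    (norm_ofReal_mul_le_indicator (phiW_nonneg hw n) hφ hu)

theorem orliczModular_wS_iterate_le (hΦ : IsYoung Φ) (hw : ∀ x, 0 ≤ w x) (hk : 0 < k)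
    (hu : ∀ x, ‖u x‖ ≤ E.indicator (fun _ => R) x) (hφ : ∀ x ∈ E, phiTW a w n x ≤ c) :
    orliczModular Φ μ ((wS a w)^[n] u) k ≤ ENNReal.ofReal (Φ (c * R / k)) * μ E := by
  rw [funext (wS_iterate_apply a w n u),
    orliczModular_comp_mul_right (fun y => (phiTW a w n y : ℂ) * u y)]
  exact orliczModular_le_of_norm_le_indicator hΦ hk
    (norm_ofReal_mul_le_indicator (phiTW_nonneg hw n) hφ hu)

end TranslationModular

theorem AperiodicElem.not_compactSpace {G : Type*} [Group G] [TopologicalSpace G] {a : G}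
    (ha : AperiodicElem a) : ¬ CompactSpace G := fun _ => by
  obtain ⟨M, hM⟩ := ha univ isCompact_univ
  have h1 : (1 : G) ∈ univ ∩ (fun x => x * a ^ (M + 1)) '' univ :=
    ⟨trivial, (a ^ (M + 1))⁻¹, trivial, inv_mul_cancel _⟩
  rw [(hM (M + 1) M.lt_succ_self).1] at h1
  exact h1

theorem WeightCondition.exists_subset_measure_sdiff_lt {G : Type*} [Group G] [TopologicalSpace G]
    [MeasurableSpace G] {μ : Measure G} {a : G} {w : G → ℝ} (hcond : WeightCondition μ a w)
    {K : Set G} (hK : IsCompact K) (hKfin : μ K ≠ ∞) {δ : ℝ≥0∞} (hδ : 0 < δ) {ε : ℝ}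
    (hε : 0 < ε) : ∃ E : Set G, ∃ n : ℕ, MeasurableSet E ∧ E ⊆ K ∧ μ (K \ E) < δ ∧
      ∀ x ∈ E, phiW a w n x < ε ∧ phiTW a w n x < ε := by
  rcases (zero_le : 0 ≤ μ K).eq_or_lt with hK0 | hK0
  · exact ⟨∅, 0, MeasurableSet.empty, empty_subset K, by rwa [sdiff_empty, ← hK0], by simp⟩
  obtain ⟨E, n, -, hE, hlim, hsmall⟩ := hcond K hK hK0
  obtain ⟨N, hN⟩ := hsmall ε hε
  have hdiff : Tendsto (fun j => μ (K \ E j)) atTop (𝓝 0) := by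
    have := ENNReal.Tendsto.sub tendsto_const_nhds hlim (Or.inl hKfin)
    rw [tsub_self] at this
    exact this.congr fun j => (measure_sdiff (hE j).2 (hE j).1.nullMeasurableSet
      (ne_top_of_le_ne_top hKfin (measure_mono (hE j).2))).symm
  obtain ⟨j, hj, hjN⟩ := ((hdiff.eventually (gt_mem_nhds hδ)).and (eventually_ge_atTop N)).exists
  exact ⟨E j, n j, (hE j).1, (hE j).2, hj, hN j hjN⟩

theorem exists_iterate_orliczModular_le_one {G : Type*} [Group G] [TopologicalSpace G]
    [MeasurableSpace G] [MeasurableMul G] {μ : Measure G} [μ.IsMulRightInvariant]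
    [IsFiniteMeasureOnCompacts μ] {a : G} {w : G → ℝ} (hw : Measurable w)
    (hwpos : ∀ x, 0 < w x) {Φ : ℝ → ℝ} (hΦ : IsYoung Φ) (hcond : WeightCondition μ a w)
    {K : Set G} (hK : IsCompact K) {f₀ g₀ : G → ℂ} (hf₀ : Measurable f₀) (hg₀ : Measurable g₀)
    {R : ℝ} (hf₀R : ∀ x, ‖f₀ x‖ ≤ K.indicator (fun _ => R) x)
    (hg₀R : ∀ x, ‖g₀ x‖ ≤ K.indicator (fun _ => R) x) {k : ℝ} (hk : 0 < k) :
    ∃ h : G → ℂ, Measurable h ∧ ∃ n : ℕ, orliczModular Φ μ (h - f₀) (k + k) ≤ 1 ∧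
      orliczModular Φ μ ((wT a w)^[n] h - g₀) (k + k) ≤ 1 := by
  have hKfin : μ K ≠ ∞ := hK.measure_lt_top.ne
  have hw0 : ∀ x, 0 ≤ w x := fun x => (hwpos x).le
  obtain ⟨ε, hε, hεK⟩ := hΦ.exists_pos_ofReal_mul_le_one hKfin (R / k)
  obtain ⟨E, n, hEm, hEK, hKE, hφ⟩ := hcond.exists_subset_measure_sdiff_lt hK hKfin
    (ENNReal.inv_pos.2 (ENNReal.ofReal_ne_top (r := Φ (R / k)))) hε
  have htranslate : ENNReal.ofReal (Φ (ε * R / k)) * μ E ≤ 1 := by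
    rw [mul_div_assoc]
    exact (mul_le_mul_right (measure_mono hEK) _).trans hεK
  have htruncate : ∀ u : G → ℂ, (∀ x, ‖u x‖ ≤ K.indicator (fun _ => R) x) →
      orliczModular Φ μ (E.indicator u - u) k ≤ 1 := fun u hu =>
    (orliczModular_le_of_norm_le_indicator hΦ hk (norm_indicator_sub_le_indicator_diff hu)).trans
      ((mul_comm _ _).trans_le (ENNReal.le_inv_iff_mul_le.1 hKE.le))
  have hSg := measurable_wS_iterate a hw n (hg₀.indicator hEm)
  refine ⟨E.indicator f₀ + (wS a w)^[n] (E.indicator g₀), (hf₀.indicator hEm).add hSg, n, ?_, ?_⟩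
  · have hS := orliczModular_wS_iterate_le (μ := μ) hΦ hw0 hk (norm_indicator_le_indicator hg₀R hEK)
      fun x hx => (hφ x hx).2.le
    simpa only [sub_add_eq_add_sub] using
      orliczModular_add_le_one hΦ hSg hk hk (htruncate f₀ hf₀R) (hS.trans htranslate)
  · have hT := orliczModular_wT_iterate_le (μ := μ) hΦ hw0 hk (norm_indicator_le_indicator hf₀R hEK)
      fun x hx => (hφ x hx).1.le
    rw [wT_iterate_add, wT_iterate_wS_iterate a fun x => (hwpos x).ne', add_sub_assoc]
    exact orliczModular_add_le_one hΦ ((hg₀.indicator hEm).sub hg₀) hk hk (hT.trans htranslate)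
      (htruncate g₀ hg₀R)

theorem transitive_of_weight_condition_general {G : Type*} [Group G] [TopologicalSpace G] [IsTopologicalGroup G]
    [LocallyCompactSpace G] [SecondCountableTopology G] [MeasurableSpace G] [BorelSpace G]
    (μ : Measure G) [μ.IsMulRightInvariant] [IsFiniteMeasureOnCompacts μ]
    (a : G) (ha : AperiodicElem a) (w : G → ℝ) (hw : Continuous w)
    (hwpos : ∀ x, 0 < w x)
    (Φ : ℝ → ℝ) (hΦ : IsYoung Φ) (hΔ : Delta2Regular G Φ)
    (hcond : WeightCondition μ a w) :
    OrliczTransitive Φ μ (wT a w) := by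
  intro f g hf hg ε hε
  obtain ⟨M, hM0, hM⟩ := hΔ.2 ha.not_compactSpace
  have hfin : ∀ {u}, MemOrlicz Φ μ u → orliczModular Φ μ u (ε / 4) < ∞ := fun hu => by
    obtain ⟨-, k, hk, hu⟩ := memOrlicz_iff.1 hu
    exact orliczModular_lt_top_of_doubling hΦ hM0 hM hk hu (by positivity)
  obtain ⟨f₀, Cf, Rf, hf₀, hCf, hRf, hf₀R, hff₀⟩ :=
    exists_bounded_compact_orliczModular_sub_le_one hΦ hf.1 (hfin hf)
  obtain ⟨g₀, Cg, Rg, hg₀, hCg, hRg, hg₀R, hgg₀⟩ :=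
    exists_bounded_compact_orliczModular_sub_le_one hΦ hg.1 (hfin hg)
  obtain ⟨h, hh, n, hhf₀, hhg₀⟩ := exists_iterate_orliczModular_le_one hw.measurable hwpos hΦ
    hcond (hCf.union hCg) hf₀ hg₀
    (norm_le_indicator_of_subset hf₀R subset_union_left hRf (le_max_left Rf Rg))
    (norm_le_indicator_of_subset hg₀R subset_union_right hRg (le_max_right Rf Rg))
    (k := ε / 8) (by positivity)
  have hhf : orliczModular Φ μ (h - f) (ε / 8 + ε / 8 + ε / 4) ≤ 1 := by
    simpa only [sub_add_sub_cancel] using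
      orliczModular_add_le_one hΦ (hf₀.sub hf.1) (by positivity) (by positivity) hhf₀ hff₀
  have hhg : orliczModular Φ μ ((wT a w)^[n] h - g) (ε / 8 + ε / 8 + ε / 4) ≤ 1 := by
    simpa only [sub_add_sub_cancel] using
      orliczModular_add_le_one hΦ (hg₀.sub hg.1) (by positivity) (by positivity) hhg₀ hgg₀
  have hmem : MemOrlicz Φ μ h := by
    simpa using (memOrlicz_iff.2 ⟨hh.sub hf.1, _, by positivity,
      hhf.trans_lt ENNReal.one_lt_top⟩).add hΦ hf
  exact ⟨h, hmem, n,
    (luxNorm_le_of_orliczModular_le_one (by positivity) hhf).trans_lt (by linarith),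
    (luxNorm_le_of_orliczModular_le_one (by positivity) hhg).trans_lt (by linarith)⟩

theorem transitive_of_weight_condition {G : Type*} [Group G] [TopologicalSpace G] [IsTopologicalGroup G]
    [LocallyCompactSpace G] [SecondCountableTopology G] [MeasurableSpace G] [BorelSpace G]
    (μ : Measure G) [μ.IsMulRightInvariant] [IsFiniteMeasureOnCompacts μ] [μ.IsOpenPosMeasure]
    (a : G) (ha : AperiodicElem a) (w : G → ℝ) (hw : Continuous w)
    (hwpos : ∀ x, 0 < w x) (hwb : ∃ C : ℝ, ∀ x, w x ≤ C)
    (hwib : ∃ c : ℝ, 0 < c ∧ ∀ x, c ≤ w x)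
    (Φ : ℝ → ℝ) (hΦ : IsYoung Φ) (hΔ : Delta2Regular G Φ)
    (hcond : WeightCondition μ a w) :
    OrliczTransitive Φ μ (wT a w) :=
  transitive_of_weight_condition_general μ a ha w hw hwpos Φ hΦ hΔ hcond
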